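/- arXiv:2604.11454 — 10 statements merged into one kernel-verified Lean document; each statement's English description precedes it below -/
import Mathlib

section
/- Let n ≥ 1 and let G be a simple graph on the vertex set Fin n. Define a sequence of labelings L : ℕ → Fin n → Fin n by L 0 u = u and L (k+1) u = the minimum of L k over the closed neighborhood of u, i.e. L (k+1) u = min of the set {L k u} ∪ {L k v : v adjacent to u in G}. Then for every vertex u, L n u equals the minimum element of the set {v : Fin n | v is reachable from u in G} (this set is nonempty since it contains u). -/
/-- Correctness of min-label propagation for weakly connected components:
after `n` iterations, each vertex's label is the minimum vertex reachable from it. -/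
theorem wcc_min_label_correct (n : ℕ) (hn : 1 ≤ n) (G : SimpleGraph (Fin n))
    [DecidableRel G.Adj] (L : ℕ → Fin n → Fin n)
    (hL0 : ∀ u, L 0 u = u)
    (hL : ∀ k u, L (k + 1) u =
      (((insert u (G.neighborFinset u)).image (L k)).min'
        (Finset.Nonempty.image (Finset.insert_nonempty u (G.neighborFinset u)) (L k))))
    (u : Fin n) :
    IsLeast {v : Fin n | G.Reachable u v} (L n u) := by
  -- Lemma A: L k u is reachable from u.
  have hreach : ∀ k u, G.Reachable u (L k u) := by
    intro k
    induction k with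
    | zero => intro u; rw [hL0]
    | succ k ih =>
      intro u
      rw [hL k u]
      have hmem := Finset.min'_mem (((insert u (G.neighborFinset u)).image (L k)))
        (Finset.Nonempty.image (Finset.insert_nonempty u (G.neighborFinset u)) (L k))
      obtain ⟨w, hw, hweq⟩ := Finset.mem_image.mp hmem
      rw [← hweq]
      rcases Finset.mem_insert.mp hw with h | h
      · subst h; exact ih w
      · exact (SimpleGraph.Adj.reachable ((G.mem_neighborFinset u w).mp h)).trans (ih w)
  -- Lemma B: if there is a walk of length ≤ k from u to v, then L k u ≤ v.
  have hle : ∀ k : ℕ, ∀ u v : Fin n, ∀ p : G.Walk u v, p.length ≤ k → L k u ≤ v := by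
    intro k
    induction k with
    | zero =>
      intro u v p hp
      have := p.eq_of_length_eq_zero (Nat.le_zero.mp hp)
      subst this
      rw [hL0]
    | succ k ih =>
      intro u v p hp
      cases p with
      | nil =>
        rw [hL k u]
        calc _ ≤ L k u := Finset.min'_le _ _ (Finset.mem_image_of_mem _ (Finset.mem_insert_self _ _))
          _ ≤ u := ih u u SimpleGraph.Walk.nil (Nat.zero_le k)
      | cons h q =>
        rename_i w
        rw [hL k u]
        have hw : w ∈ insert u (G.neighborFinset u) :=
          Finset.mem_insert_of_mem ((G.mem_neighborFinset u w).mpr h)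
        calc _ ≤ L k w := Finset.min'_le _ _ (Finset.mem_image_of_mem _ hw)
          _ ≤ v := ih w v q (by simpa using Nat.succ_le_succ_iff.mp hp)
  constructor
  · exact hreach n u
  · intro v hv
    obtain ⟨p⟩ := hv
    have hlt : p.toPath.1.length < Fintype.card (Fin n) := p.toPath.2.length_lt
    exact hle n u v p.toPath.1 (by simpa using Nat.le_of_lt hlt)
end

section
/- Let n ≥ 1 and let G be a simple graph on the vertex set Fin n. Define a sequence of labelings L : ℕ → Fin n → Fin n by L 0 u = u and L (k+1) u = the minimum of L k over the closed neighborhood of u, i.e. L (k+1) u = min of the set {L k u} ∪ {L k v : v adjacent to u in G}. Then the sequence stabilizes after at most n iterations: for every m ≥ n, L m = L n. -/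
namespace WccAux

variable {n : ℕ} (G : SimpleGraph (Fin n)) [DecidableRel G.Adj]

/-- Closed ball of radius `k` around `u`. -/
def B : ℕ → Fin n → Finset (Fin n)
  | 0, u => {u}
  | k+1, u => (insert u (G.neighborFinset u)).biUnion (B k)

lemma mem_B_self : ∀ k u, u ∈ B G k u
  | 0, u => Finset.mem_singleton_self u
  | k+1, u => Finset.mem_biUnion.2
      ⟨u, Finset.mem_insert_self _ _, mem_B_self k u⟩

lemma B_nonempty (k : ℕ) (u : Fin n) : (B G k u).Nonempty :=
  ⟨u, mem_B_self G k u⟩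

lemma B_add (j k : ℕ) (u : Fin n) :
    B G (j + k) u = (B G j u).biUnion (B G k) := by
  induction j generalizing u with
  | zero => simp [B, Finset.singleton_biUnion]
  | succ j ih =>
      have h : j + 1 + k = (j + k) + 1 := by omega
      rw [h]
      show (insert u (G.neighborFinset u)).biUnion (B G (j + k))
        = ((insert u (G.neighborFinset u)).biUnion (B G j)).biUnion (B G k)
      rw [Finset.biUnion_biUnion]
      exact Finset.biUnion_congr rfl fun v _ => ih v

lemma B_mono (k : ℕ) (u : Fin n) : B G k u ⊆ B G (k + 1) u := by
  intro x hx
  rw [B_add G k 1]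
  exact Finset.mem_biUnion.2 ⟨x, hx, mem_B_self G 1 x⟩

lemma B_persist {k : ℕ} {u : Fin n} (h : B G (k + 1) u = B G k u) :
    B G (k + 2) u = B G (k + 1) u := by
  have h1 : B G (k + 2) u = (B G (k+1) u).biUnion (B G 1) := B_add G (k+1) 1 u
  have h2 : B G (k + 1) u = (B G k u).biUnion (B G 1) := B_add G k 1 u
  calc B G (k + 2) u = (B G (k+1) u).biUnion (B G 1) := h1
    _ = (B G k u).biUnion (B G 1) := by rw [h]
    _ = B G (k + 1) u := h2.symm

lemma B_card {k : ℕ} {u : Fin n} (h : B G (k + 1) u ≠ B G k u) :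
    k + 2 ≤ (B G (k + 1) u).card := by
  induction k with
  | zero =>
      have hu : u ∈ B G 1 u := mem_B_self G 1 u
      have : ∃ v ∈ B G 1 u, v ≠ u := by
        by_contra hc
        push_neg at hc
        apply h
        apply Finset.Subset.antisymm
        · intro x hx; simpa [B] using hc x hx
        · intro x hx; simp [B] at hx; subst hx; exact hu
      obtain ⟨v, hv, hvu⟩ := this
      exact Finset.one_lt_card.2 ⟨v, hv, u, hu, hvu⟩
  | succ k ih =>
      have h' : B G (k + 1) u ≠ B G k u := fun he => h (B_persist G he)
      have hlt : B G (k + 1) u ⊂ B G (k + 1 + 1) u :=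
        Finset.ssubset_iff_subset_ne.2 ⟨B_mono G (k+1) u, fun he => h he.symm⟩
      have h1 := Finset.card_lt_card hlt
      have h2 := ih h'
      omega

lemma B_stable {k : ℕ} (hk : n ≤ k) (u : Fin n) :
    B G (k + 1) u = B G k u := by
  by_contra h
  have h1 := B_card G h
  have h2 : (B G (k + 1) u).card ≤ n := by
    simpa using Finset.card_le_card (Finset.subset_univ (B G (k+1) u))
  omega

lemma min'_congr' {α : Type*} [LinearOrder α] {s t : Finset α} (h : s = t)
    (hs : s.Nonempty) : s.min' hs = t.min' (h ▸ hs) := by subst h; rfl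

lemma min'_biUnion (s : Finset (Fin n))
    (t : Fin n → Finset (Fin n)) (ht : ∀ v, (t v).Nonempty)
    (h1 : (s.biUnion t).Nonempty) (h2 : (s.image fun v => (t v).min' (ht v)).Nonempty) :
    (s.biUnion t).min' h1 = (s.image fun v => (t v).min' (ht v)).min' h2 := by
  apply le_antisymm
  · apply Finset.le_min'
    intro y hy
    simp only [Finset.mem_image] at hy
    obtain ⟨v, hv, rfl⟩ := hy
    exact Finset.min'_le _ _ (Finset.mem_biUnion.2 ⟨v, hv, Finset.min'_mem _ _⟩)
  · obtain ⟨v, hv, hmem⟩ := Finset.mem_biUnion.1 (Finset.min'_mem (s.biUnion t) h1)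
    calc (s.image fun v => (t v).min' (ht v)).min' h2
        ≤ (t v).min' (ht v) :=
          Finset.min'_le _ _ (Finset.mem_image_of_mem _ hv)
      _ ≤ _ := Finset.min'_le _ _ hmem

end WccAux

open WccAux in
/-- The min-label propagation sequence stabilizes after at most `n` iterations. -/
theorem wcc_min_label_stabilizes (n : ℕ) (hn : 1 ≤ n) (G : SimpleGraph (Fin n))
    [DecidableRel G.Adj] (L : ℕ → Fin n → Fin n)
    (hL0 : ∀ u, L 0 u = u)
    (hL : ∀ k u, L (k + 1) u =
      (((insert u (G.neighborFinset u)).image (L k)).min'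
        (Finset.Nonempty.image (Finset.insert_nonempty u (G.neighborFinset u)) (L k)))) :
    ∀ m, n ≤ m → L m = L n := by
  -- characterization: L k u = min of ball
  have key : ∀ k u, L k u = (B G k u).min' (B_nonempty G k u) := by
    intro k
    induction k with
    | zero => intro u; simp [hL0, B]
    | succ k ih =>
        intro u
        rw [hL k u]
        have e1 : ((insert u (G.neighborFinset u)).image (L k))
            = ((insert u (G.neighborFinset u)).image fun v => (B G k v).min' (B_nonempty G k v)) :=
          Finset.image_congr fun v _ => ih v
        rw [min'_congr' e1]
        exact (min'_biUnion _ (B G k) (B_nonempty G k)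
          (B_nonempty G (k+1) u) (Finset.Nonempty.image (Finset.insert_nonempty _ _) _)).symm
  have bstab : ∀ m, n ≤ m → ∀ u, B G m u = B G n u := by
    intro m hm
    induction m with
    | zero => intro u; exact absurd hm (by omega)
    | succ m ih =>
        intro u
        rcases Nat.lt_or_ge n (m+1) with h | h
        · have hnm : n ≤ m := by omega
          rw [B_stable G hnm u, ih hnm u]
        · have : m + 1 = n := by omega
          rw [this]
  intro m hm
  funext u
  rw [key m u, key n u]
  exact min'_congr' (bstab m hm u) _
end

section
/- Let n ≥ 1, let r be a binary relation on Fin n, and let s : Fin n. Define a sequence of sets S : ℕ → Set (Fin n) by S 0 = {s} and S (k+1) = S k ∪ {v | ∃ u ∈ S k, r u v}. Then S n = {v | Relation.ReflTransGen r s v}, i.e. after n iterations S equals the set of vertices reachable from s. -/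
/-- Correctness of the boolean-semiring reachability iteration: after `n` iterations,
the computed set equals the set of vertices reachable from the start vertex `s`. -/
theorem reach_iter_correct (n : ℕ) (hn : 1 ≤ n) (r : Fin n → Fin n → Prop) (s : Fin n)
    (S : ℕ → Set (Fin n))
    (hS0 : S 0 = {s})
    (hS : ∀ k, S (k + 1) = S k ∪ {v | ∃ u ∈ S k, r u v}) :
    S n = {v | Relation.ReflTransGen r s v} := by
  -- Monotonicity
  have hstep : ∀ k, S k ⊆ S (k + 1) := by
    intro k
    rw [hS k]; exact Set.subset_union_left
  have hmono : ∀ k m, k ≤ m → S k ⊆ S m := by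
    intro k m hkm
    induction m with
    | zero => simp_all
    | succ m ih =>
      rcases Nat.lt_or_ge k (m+1) with h | h
      · exact (ih (Nat.lt_succ_iff.mp h)).trans (hstep m)
      · have : k = m + 1 := le_antisymm hkm h
        subst this; exact subset_rfl
  -- Forward inclusion: S k ⊆ reach set
  have hfwd : ∀ k, S k ⊆ {v | Relation.ReflTransGen r s v} := by
    intro k
    induction k with
    | zero => rw [hS0]; rintro v rfl; exact Relation.ReflTransGen.refl
    | succ k ih =>
      rw [hS k]
      rintro v (hv | ⟨u, hu, huv⟩)
      · exact ih hv
      · exact Relation.ReflTransGen.tail (ih hu) huv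
  -- Stabilization: if S k = S (k+1), then S is constant from k on
  have hstab : ∀ k, S k = S (k + 1) → ∀ m, k ≤ m → S m = S k := by
    intro k hk m hkm
    induction m with
    | zero =>
      have : k = 0 := Nat.le_zero.mp hkm
      subst this; rfl
    | succ m ih =>
      rcases Nat.lt_or_ge k (m+1) with h | h
      · have hm : S m = S k := ih (Nat.lt_succ_iff.mp h)
        rw [hS m, hm, ← hS k, ← hk]
      · have : k = m + 1 := le_antisymm hkm h
        subst this; rfl
  -- Fixed point contains all reachable vertices
  have hclosed : ∀ k, S k = S (k + 1) → ∀ v, Relation.ReflTransGen r s v → v ∈ S k := by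
    intro k hk v hv
    induction hv with
    | refl =>
      have : s ∈ S 0 := by rw [hS0]; rfl
      exact hmono 0 k (Nat.zero_le k) this
    | tail hab hbc ih =>
      rw [hk, hS k]
      exact Or.inr ⟨_, ih, hbc⟩
  -- There is a stabilization point k < n
  have hfin : ∀ (T : Set (Fin n)), T.Finite := fun T => T.toFinite
  have hexists : ∃ k < n, S k = S (k + 1) := by
    by_contra h
    push_neg at h
    have hcard : ∀ k ≤ n, k + 1 ≤ (S k).ncard := by
      intro k hk
      induction k with
      | zero => rw [hS0]; simp
      | succ k ih =>
        have hk' : k ≤ n := Nat.le_of_succ_le hk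
        have hne : S k ≠ S (k + 1) := h k (Nat.lt_of_succ_le hk)
        have hss : S k ⊂ S (k + 1) := (hstep k).ssubset_of_ne hne
        have := Set.ncard_lt_ncard hss (hfin _)
        have := ih hk'
        omega
    have h1 : n + 1 ≤ (S n).ncard := hcard n le_rfl
    have h2 : (S n).ncard ≤ n := by
      have := Set.ncard_le_ncard (Set.subset_univ (S n)) Set.finite_univ
      simpa [Set.ncard_univ] using this
    omega
  obtain ⟨k, hkn, hk⟩ := hexists
  apply Set.Subset.antisymm
  · exact hfwd n
  · intro v hv
    have : v ∈ S k := hclosed k hk v hv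
    exact hmono k n (Nat.le_of_lt hkn) this
end

section
/- Let n ≥ 1, let w : Fin n → Fin n → ℕ∞ be edge weights (with ⊤ meaning no edge), and let s : Fin n. Define d : ℕ → Fin n → ℕ∞ by d 0 v = (if v = s then 0 else ⊤) and d (k+1) v = min (d k v) (⨅_{u : Fin n} (d k u + w u v)). Then for every v : Fin n, d n v = ⨅ over all k : ℕ and all functions p : Fin (k+1) → Fin n with p 0 = s and p (Fin.last k) = v of (∑_{t : Fin k} w (p t.castSucc) (p t.succ)). That is, after n iterations d v is the shortest-path distance from s to v (and ⊤ if v is unreachable from s). -/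
/-!
By induction, `d k v` lies between the shortest-walk distance from `s` to `v` (which obeys the
triangle inequality `dist v ≤ dist u + w u v`) and the cost of any walk from `s` to `v` with at
most `k` edges. A walk with at least `n` edges on `n` vertices revisits a vertex, and since the
weights are nonnegative, cutting out the closed sub-walk does not increase its cost; so walks with
fewer than `n` edges already realise the shortest distance, and `d n` equals it.
-/

open Finset

variable {V M : Type*}

section WalkCost

variable [AddCommMonoid M] (w : V → V → M)

/-- A walk of length `m` is encoded by a sequence `p : ℕ → V`, of which only `p 0, …, p m` matter. -/
def walkCost (p : ℕ → V) (m : ℕ) : M :=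
  ∑ t ∈ range m, w (p t) (p (t + 1))

theorem walkCost_zero (p : ℕ → V) : walkCost w p 0 = 0 :=
  sum_range_zero _

theorem walkCost_succ (p : ℕ → V) (m : ℕ) :
    walkCost w p (m + 1) = walkCost w p m + w (p m) (p (m + 1)) :=
  sum_range_succ _ m

theorem walkCost_congr {p q : ℕ → V} {m : ℕ} (h : ∀ t ≤ m, p t = q t) :
    walkCost w p m = walkCost w q m :=
  sum_congr rfl fun t ht => by
    rw [mem_range] at ht
    rw [h t ht.le, h (t + 1) ht]

theorem sum_fin_eq_walkCost (p : ℕ → V) (k : ℕ) :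
    ∑ t : Fin k, w (p t.castSucc) (p t.succ) = walkCost w p k := by
  simp only [Fin.val_castSucc, Fin.val_succ]
  exact Fin.sum_univ_eq_sum_range (fun t => w (p t) (p (t + 1))) k

theorem exists_walkCost_le_of_revisit [PartialOrder M] [CanonicallyOrderedAdd M] {p : ℕ → V}
    {i j m : ℕ} (hij : i ≤ j) (hjm : j ≤ m) (hp : p i = p j) :
    ∃ q : ℕ → V, q 0 = p 0 ∧ q (m - (j - i)) = p m ∧
      walkCost w q (m - (j - i)) ≤ walkCost w p m := by
  obtain ⟨e, rfl⟩ := Nat.exists_eq_add_of_le hij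
  obtain ⟨r, rfl⟩ := Nat.exists_eq_add_of_le hjm
  let q : ℕ → V := fun t => if t ≤ i then p t else p (t + e)
  have hq : ∀ x, q (i + x) = p (i + e + x) := by
    rintro (_ | x)
    · simpa [q] using hp
    · simp only [q, if_neg (by omega : ¬i + (x + 1) ≤ i)]
      congr 1
      omega
  have hlen : i + e + r - (i + e - i) = i + r := by omega
  refine ⟨q, by simp [q], by rw [hlen, hq], ?_⟩
  -- the prefix of length `i` is kept and the loop of length `e` after it is dropped
  rw [hlen, walkCost, walkCost, sum_range_add, sum_range_add, sum_range_add]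
  have hprefix : ∑ t ∈ range i, w (q t) (q (t + 1)) = ∑ t ∈ range i, w (p t) (p (t + 1)) :=
    sum_congr rfl fun t ht => by
      rw [mem_range] at ht
      simp only [q, if_pos ht.le, if_pos (Nat.succ_le_of_lt ht)]
  have hsuffix : ∑ x ∈ range r, w (q (i + x)) (q (i + x + 1)) =
      ∑ x ∈ range r, w (p (i + e + x)) (p (i + e + x + 1)) :=
    sum_congr rfl fun x _ => by rw [hq, add_assoc i x 1, hq]; rfl
  rw [hprefix, hsuffix]
  exact add_le_add le_self_add le_rfl

theorem exists_walk_length_lt_card_walkCost_le [PartialOrder M] [CanonicallyOrderedAdd M] [Fintype V]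
    (p : ℕ → V) (m : ℕ) :
    ∃ m' < Fintype.card V, ∃ q : ℕ → V, q 0 = p 0 ∧ q m' = p m ∧
      walkCost w q m' ≤ walkCost w p m := by
  induction m using Nat.strong_induction_on generalizing p with
  | _ m ih =>
  by_cases hm : m < Fintype.card V
  · exact ⟨m, hm, p, rfl, rfl, le_rfl⟩
  obtain ⟨i, j, hij, hjm, hp⟩ : ∃ i j : ℕ, i < j ∧ j ≤ m ∧ p i = p j := by
    obtain ⟨x, y, hxy, hp⟩ :=
      Fintype.exists_ne_map_eq_of_card_lt (fun t : Fin (m + 1) => p t) (by simp; omega)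
    rcases Fin.lt_or_lt_of_ne hxy with h | h
    · exact ⟨x, y, h, y.is_le, hp⟩
    · exact ⟨y, x, h, x.is_le, hp.symm⟩
  obtain ⟨q, hq0, hqm, hqp⟩ := exists_walkCost_le_of_revisit w hij.le hjm hp
  obtain ⟨m', hm', q', hq'0, hq'm, hq'q⟩ := ih (m - (j - i)) (by omega) q
  exact ⟨m', hm', q', hq'0.trans hq0, hq'm.trans hqm, hq'q.trans hqp⟩

end WalkCost

section ShortestDist

variable (w : V → V → ℕ∞)

noncomputable def walkDist (s v : V) : ℕ∞ :=
  ⨅ (m : ℕ) (p : ℕ → V) (_ : p 0 = s) (_ : p m = v), walkCost w p m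

theorem walkDist_le_walkCost {s : V} {p : ℕ → V} (hp : p 0 = s) (m : ℕ) :
    walkDist w s (p m) ≤ walkCost w p m :=
  iInf₂_le_of_le m p <| iInf₂_le_of_le hp rfl le_rfl

theorem iInf_finPath_eq_walkDist (s v : V) :
    ⨅ (k : ℕ) (p : Fin (k + 1) → V) (_ : p 0 = s) (_ : p (Fin.last k) = v),
      ∑ t : Fin k, w (p t.castSucc) (p t.succ) = walkDist w s v := by
  apply le_antisymm
  · refine le_iInf₂ fun m p => le_iInf₂ fun hp0 hpm => ?_
    refine iInf₂_le_of_le m (fun i => p i) <| iInf₂_le_of_le hp0 hpm ?_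
    exact (sum_fin_eq_walkCost w p m).le
  · refine le_iInf₂ fun k p => le_iInf₂ fun hp0 hpk => ?_
    let q : ℕ → V := fun t => p (Fin.ofNat (k + 1) t)
    have hq : ∀ i : Fin (k + 1), q i = p i := fun i => by simp [q]
    have := walkDist_le_walkCost w (p := q) ((hq 0).trans hp0) k
    rw [← sum_fin_eq_walkCost, ← Fin.val_last k, hq, hpk] at this
    simp only [hq] at this
    exact this

theorem walkDist_le_ite [DecidableEq V] (s v : V) : walkDist w s v ≤ if v = s then 0 else ⊤ := by
  split_ifs with hv
  · simpa [hv, walkCost_zero] using walkDist_le_walkCost w (p := fun _ => s) rfl 0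
  · exact le_top

theorem walkDist_le_add (s u v : V) : walkDist w s v ≤ walkDist w s u + w u v := by
  simp only [walkDist, ENat.iInf_add]
  refine le_iInf₂ fun m p => le_iInf₂ fun hp0 hpm => ?_
  let q : ℕ → V := fun t => if t ≤ m then p t else v
  have hqm : walkCost w q m = walkCost w p m :=
    walkCost_congr w fun t ht => if_pos ht
  calc walkDist w s v = walkDist w s (q (m + 1)) := by simp [q]
    _ ≤ walkCost w q (m + 1) := walkDist_le_walkCost w (by simpa [q] using hp0) _
    _ = walkCost w p m + w u v := by simp [walkCost_succ, hqm, q, hpm]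

end ShortestDist

section MinPlusIteration

variable (w : V → V → ℕ∞) {s : V} {d : ℕ → V → ℕ∞}

theorem iterate_antitone (hd : ∀ k v, d (k + 1) v = min (d k v) (⨅ u, d k u + w u v)) (v : V) :
    Antitone (d · v) :=
  antitone_nat_of_succ_le fun k => (hd k v).trans_le (min_le_left _ _)

theorem iterate_succ_le (hd : ∀ k v, d (k + 1) v = min (d k v) (⨅ u, d k u + w u v))
    (k : ℕ) (u v : V) : d (k + 1) v ≤ d k u + w u v :=
  (hd k v).trans_le <| (min_le_right _ _).trans (iInf_le _ u)

theorem iterate_le_walkCost [DecidableEq V] (hd0 : ∀ v, d 0 v = if v = s then 0 else ⊤)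
    (hd : ∀ k v, d (k + 1) v = min (d k v) (⨅ u, d k u + w u v))
    {p : ℕ → V} (hp : p 0 = s) {m k : ℕ} (hmk : m ≤ k) : d k (p m) ≤ walkCost w p m := by
  refine (iterate_antitone w hd _ hmk).trans ?_
  induction m with
  | zero => simp [hd0, hp, walkCost_zero]
  | succ m ih =>
    calc d (m + 1) (p (m + 1)) ≤ d m (p m) + w (p m) (p (m + 1)) := iterate_succ_le w hd _ _ _
      _ ≤ walkCost w p m + w (p m) (p (m + 1)) := add_le_add_left (ih (by omega)) _
      _ = walkCost w p (m + 1) := (walkCost_succ w p m).symm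

theorem walkDist_le_iterate [DecidableEq V] (hd0 : ∀ v, d 0 v = if v = s then 0 else ⊤)
    (hd : ∀ k v, d (k + 1) v = min (d k v) (⨅ u, d k u + w u v)) (k : ℕ) (v : V) :
    walkDist w s v ≤ d k v := by
  induction k generalizing v with
  | zero => simpa [hd0] using walkDist_le_ite w s v
  | succ k ih =>
    rw [hd]
    refine le_min (ih v) (le_iInf fun u => ?_)
    exact (walkDist_le_add w s u v).trans (add_le_add_left (ih u) _)

theorem iterate_le_walkDist [DecidableEq V] [Fintype V]
    (hd0 : ∀ v, d 0 v = if v = s then 0 else ⊤)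
    (hd : ∀ k v, d (k + 1) v = min (d k v) (⨅ u, d k u + w u v))
    {k : ℕ} (hk : Fintype.card V ≤ k) (v : V) : d k v ≤ walkDist w s v := by
  refine le_iInf₂ fun m p => le_iInf₂ fun hp0 hpm => ?_
  obtain ⟨m', hm', q, hq0, hqm, hqp⟩ := exists_walk_length_lt_card_walkCost_le w p m
  calc d k v = d k (q m') := by rw [hqm, hpm]
    _ ≤ walkCost w q m' := iterate_le_walkCost w hd0 hd (hq0.trans hp0) (by omega)
    _ ≤ walkCost w p m := hqp

end MinPlusIteration

theorem minplus_iteration_shortest_path_general (n : ℕ)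
    (w : Fin n → Fin n → ℕ∞) (s : Fin n) (d : ℕ → Fin n → ℕ∞)
    (hd0 : ∀ v, d 0 v = if v = s then 0 else ⊤)
    (hd : ∀ k v, d (k + 1) v = min (d k v) (⨅ u : Fin n, d k u + w u v)) :
    ∀ v : Fin n, d n v =
      ⨅ (k : ℕ) (p : Fin (k + 1) → Fin n) (_ : p 0 = s) (_ : p (Fin.last k) = v),
        ∑ t : Fin k, w (p t.castSucc) (p t.succ) := by
  intro v
  rw [iInf_finPath_eq_walkDist]
  exact le_antisymm (iterate_le_walkDist w hd0 hd (by simp) v) (walkDist_le_iterate w hd0 hd n v)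

/-- Correctness of the tropical (min-plus) shortest-path iteration: after `n`
iterations, `d n v` is the shortest-path distance from `s` to `v` (and `⊤` if
`v` is unreachable from `s`). -/
theorem minplus_iteration_shortest_path (n : ℕ) (hn : 1 ≤ n)
    (w : Fin n → Fin n → ℕ∞) (s : Fin n) (d : ℕ → Fin n → ℕ∞)
    (hd0 : ∀ v, d 0 v = if v = s then 0 else ⊤)
    (hd : ∀ k v, d (k + 1) v = min (d k v) (⨅ u : Fin n, d k u + w u v)) :
    ∀ v : Fin n, d n v =
      ⨅ (k : ℕ) (p : Fin (k + 1) → Fin n) (_ : p 0 = s) (_ : p (Fin.last k) = v),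
        ∑ t : Fin k, w (p t.castSucc) (p t.succ) :=
  minplus_iteration_shortest_path_general n w s d hd0 hd
end

section
/- Let M be an additive commutative monoid, let n ≥ 1, and let v : Fin n → M. Define X : ℕ → Fin n → M by X 0 i = 0 and X (k+1) i = v i + X k (i + 1), where i + 1 denotes the cyclic successor in Fin n (wraparound addition). Then for every i : Fin n, X n i = ∑_{j : Fin n} v j. -/
open Finset

theorem eq_sum_range_nsmul_of_step {G M : Type*} [AddMonoid G] [AddCommMonoid M] (a : G)
    (v : G → M) (X : ℕ → G → M) (hX0 : ∀ i, X 0 i = 0)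
    (hX : ∀ k i, X (k + 1) i = v i + X k (i + a)) (k : ℕ) (i : G) :
    X k i = ∑ j ∈ range k, v (i + j • a) := by
  induction k generalizing i with
  | zero => simp [hX0]
  | succ k ih =>
    rw [hX, ih, sum_range_succ', zero_nsmul, add_zero, add_comm]
    simp only [succ_nsmul', add_assoc]

open Fin.NatCast in
theorem Fin.val_nsmul_one_eq_self {n : ℕ} [NeZero n] (j : Fin n) : (j : ℕ) • (1 : Fin n) = j := by
  rw [nsmul_one, Fin.cast_val_eq_self]

theorem Fin.sum_range_add_nsmul_one {M : Type*} [AddCommMonoid M] {n : ℕ} [NeZero n]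
    (v : Fin n → M) (i : Fin n) : ∑ j ∈ range n, v (i + j • 1) = ∑ j, v j := by
  rw [← Fin.sum_univ_eq_sum_range (fun j => v (i + j • 1))]
  simp only [Fin.val_nsmul_one_eq_self]
  exact Equiv.sum_comp (Equiv.addLeft i) v

/-- Correctness of the `sum[0̲, ⊕]` construction: starting from the zero vector and
repeatedly applying a cyclic rotation step followed by pointwise addition with `v`,
after `n` iterations every entry equals the total sum of the entries of `v`. -/
theorem rotate_sum_correct (M : Type*) [AddCommMonoid M] (n : ℕ) [NeZero n]
    (v : Fin n → M) (X : ℕ → Fin n → M)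
    (hX0 : ∀ i, X 0 i = 0)
    (hX : ∀ k i, X (k + 1) i = v i + X k (i + 1)) :
    ∀ i : Fin n, X n i = ∑ j : Fin n, v j := by
  intro i
  rw [eq_sum_range_nsmul_of_step 1 v X hX0 hX, Fin.sum_range_add_nsmul_one]
end

section
/- Let n ≥ 1 and for 0 ≤ k < n let b_k : Fin n → ℤ be the canonical vector with value 1 at position k and value 0 at all other positions. Define X : ℕ → Matrix (Fin n) (Fin n) ℤ by X 0 = 0 and, for each 0 ≤ k < n, X (k+1) = X k + (X k *ᵥ b_{n-1} + b_k) ⊗ b_k + b_k ⊗ b_{n-1}, where u ⊗ w denotes the outer product matrix with (u ⊗ w)_{ij} = u_i · w_j and *ᵥ is matrix-vector multiplication. Then for all i, j : Fin n, (X n) i j = (if i ≤ j then 1 else 0) + (if j = n-1 then 1 else 0). Consequently X n − 𝟙 ⊗ b_{n-1}, where 𝟙 is the all-ones vector, equals the upper-triangular ordering matrix S_≤ with entry 1 at all positions i ≤ j and 0 elsewhere. -/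
open Matrix

/-- Correctness of the (corrected) construction of the ordering matrix `S_≤`. -/
theorem ordering_matrix_construction (n : ℕ) (hn : 1 ≤ n)
    (b : Fin n → Fin n → ℤ) (hb : ∀ k i, b k i = if i = k then 1 else 0)
    (X : ℕ → Matrix (Fin n) (Fin n) ℤ)
    (hX0 : X 0 = 0)
    (hX : ∀ k (hk : k < n), X (k + 1) =
      X k + Matrix.vecMulVec (X k *ᵥ b ⟨n - 1, by omega⟩ + b ⟨k, hk⟩) (b ⟨k, hk⟩)
          + Matrix.vecMulVec (b ⟨k, hk⟩) (b ⟨n - 1, by omega⟩)) :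
    (∀ i j : Fin n, X n i j =
        (if i ≤ j then 1 else 0) + (if j = (⟨n - 1, by omega⟩ : Fin n) then 1 else 0)) ∧
    X n - Matrix.vecMulVec (fun _ => 1) (b ⟨n - 1, by omega⟩) =
      Matrix.of (fun i j : Fin n => if i ≤ j then (1 : ℤ) else 0) := by
  have key : ∀ k, k ≤ n → ∀ i j : Fin n, X k i j =
      (if (i : ℕ) ≤ (j : ℕ) ∧ (j : ℕ) < k then 1 else 0)
        + (if (j : ℕ) = n - 1 ∧ (i : ℕ) < k then 1 else 0) := by
    intro k
    induction k with
    | zero => intro _ i j; simp [hX0]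
    | succ k ih =>
      intro hk i j
      have hk' : k < n := hk
      have ihk := ih (le_of_lt hk')
      rw [hX k hk']
      simp only [Matrix.add_apply, Matrix.vecMulVec_apply, Pi.add_apply,
        Matrix.mulVec, dotProduct, hb, mul_ite, mul_one, mul_zero,
        Finset.sum_ite_eq', Finset.mem_univ, if_true]
      rw [ihk, ihk]
      have hi := i.isLt; have hj := j.isLt
      simp only [Fin.ext_iff, Fin.val_mk, eq_self_iff_true, true_and]
      split_ifs <;> push_cast <;> omega
  have h1 : ∀ i j : Fin n, X n i j =
      (if i ≤ j then 1 else 0) + (if j = (⟨n - 1, by omega⟩ : Fin n) then 1 else 0) := by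
    intro i j
    rw [key n le_rfl i j]
    have hi := i.isLt; have hj := j.isLt
    simp only [Fin.le_def, Fin.ext_iff]
    split_ifs <;> omega
  refine ⟨h1, ?_⟩
  ext i j
  simp only [Matrix.sub_apply, Matrix.vecMulVec_apply, Matrix.of_apply, h1 i j, hb, one_mul]
  split_ifs <;> simp_all
end

section
/- Let n ≥ 1, and let S be the n × n integer matrix with S i j = 1 if i < j and S i j = 0 otherwise. Let b_0 and b_{n-1} be the canonical vectors with a single 1 at positions 0 and n−1 respectively. Then the matrix P = pickAny(S) + b_{n-1} ⊗ b_0 (where u ⊗ w is the outer product (u ⊗ w)_{ij} = u_i · w_j) satisfies P i j = 1 if j = i + 1 (cyclic successor in Fin n, with wraparound) and P i j = 0 otherwise; moreover for every vector v : Fin n → ℤ, (P *ᵥ v) i = v (i + 1) for all i, i.e. multiplying by P cyclically rotates all entries of a vector by one position up. -/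
open Matrix

/-- `pickAny A` keeps, in each row, only the first (lowest column index) nonzero
entry of `A`, setting all other entries to zero. -/
def pickAny {m n : ℕ} {R : Type*} [Zero R] [DecidableEq R]
    (A : Matrix (Fin m) (Fin n) R) : Matrix (Fin m) (Fin n) R :=
  Matrix.of fun i j => if A i j ≠ 0 ∧ ∀ k < j, A i k = 0 then A i j else 0

/-- The rotate construction `pickAny(S_<) + b_{n-1} ⊗ b_0` is the cyclic-shift
permutation matrix: multiplying by it rotates all entries of a vector by one
position up. -/
theorem rotate_matrix_correct (n : ℕ) [NeZero n]
    (S : Matrix (Fin n) (Fin n) ℤ) (hS : ∀ i j, S i j = if i < j then 1 else 0)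
    (b : Fin n → Fin n → ℤ) (hb : ∀ k i, b k i = if i = k then 1 else 0)
    (P : Matrix (Fin n) (Fin n) ℤ)
    (hP : P = pickAny S +
      Matrix.vecMulVec (b ⟨n - 1, by have := NeZero.pos n; omega⟩) (b ⟨0, NeZero.pos n⟩)) :
    (∀ i j : Fin n, P i j = if j = i + 1 then 1 else 0) ∧
    (∀ (v : Fin n → ℤ) (i : Fin n), (P *ᵥ v) i = v (i + 1)) := by
  have hn := NeZero.pos n
  have hPe : ∀ i j : Fin n, P i j = if j = i + 1 then 1 else 0 := by
    intro i j
    have hsucc : ((i + 1 : Fin n) : ℕ) = (i.val + 1) % n := by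
      simp [Fin.add_def, Nat.add_mod]
    have hLHS : P i j = (if S i j ≠ 0 ∧ ∀ k < j, S i k = 0 then S i j else 0) +
        (if i = (⟨n - 1, by omega⟩ : Fin n) then (1:ℤ) else 0) *
        (if j = (⟨0, hn⟩ : Fin n) then (1:ℤ) else 0) := by
      rw [hP]
      simp only [Matrix.add_apply, pickAny, Matrix.of_apply, Matrix.vecMulVec_apply, hb]
    -- translate the three conditions to Nat statements
    have hieq : (i = (⟨n - 1, by omega⟩ : Fin n)) ↔ (i : ℕ) = n - 1 := by
      rw [Fin.ext_iff]
    have hjeq0 : (j = (⟨0, hn⟩ : Fin n)) ↔ (j : ℕ) = 0 := by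
      rw [Fin.ext_iff]
    have hpick : (S i j ≠ 0 ∧ ∀ k < j, S i k = 0) ↔ (j : ℕ) = i + 1 := by
      constructor
      · rintro ⟨h1, h2⟩
        rw [hS] at h1
        have hij : (i : ℕ) < j := by
          by_contra h; simp [Fin.lt_def, h] at h1
        by_contra hne
        have hk : ((⟨i.val + 1, by have := j.isLt; omega⟩ : Fin n) : ℕ) < j := by
          simp only [Fin.val_mk]; omega
        have := h2 _ (Fin.lt_def.mpr hk)
        rw [hS] at this
        simp only [Fin.lt_def, Fin.val_mk] at this
        omega
      · intro h
        have hlt : i < j := Fin.lt_def.mpr (by omega)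
        refine ⟨by rw [hS]; simp [hlt], fun k hk => by
          rw [hS]
          have : ¬ i < k := by simp only [Fin.lt_def] at hk ⊢; omega
          simp [this]⟩
    rw [hLHS]
    by_cases hji : j = i + 1
    · rw [if_pos hji]
      have hjv : (j : ℕ) = (i.val + 1) % n := by rw [hji, hsucc]
      by_cases hi : (i : ℕ) = n - 1
      · have hmod : (i.val + 1) % n = 0 := by
          rw [hi, Nat.sub_add_cancel hn, Nat.mod_self]
        have hj0 : (j : ℕ) = 0 := by rw [hjv, hmod]
        have hnp : ¬ (S i j ≠ 0 ∧ ∀ k < j, S i k = 0) := by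
          rw [hpick]; omega
        rw [if_neg hnp, if_pos (hieq.mpr hi), if_pos (hjeq0.mpr hj0)]; ring
      · have hlt : i.val + 1 < n := by have := i.isLt; omega
        have hjv' : (j : ℕ) = i + 1 := by rw [hjv]; exact Nat.mod_eq_of_lt hlt
        rw [if_pos (hpick.mpr hjv'), hS, if_pos (Fin.lt_def.mpr (by omega)),
          if_neg (fun h => hi (hieq.mp h))]
        ring
    · rw [if_neg hji]
      have hjv : ¬ (j : ℕ) = (i.val + 1) % n := fun h =>
        hji (Fin.ext (by rw [hsucc, h]))
      by_cases hi : (i : ℕ) = n - 1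
      · have hmod : (i.val + 1) % n = 0 := by
          rw [hi, Nat.sub_add_cancel hn, Nat.mod_self]
        have hj0 : ¬ (j : ℕ) = 0 := by intro h; apply hjv; rw [h, hmod]
        have hnp : ¬ (S i j ≠ 0 ∧ ∀ k < j, S i k = 0) := by
          rw [hpick]; have := j.isLt; omega
        rw [if_neg hnp, if_neg (fun h => hj0 (hjeq0.mp h))]; ring
      · have hlt : i.val + 1 < n := by have := i.isLt; omega
        have hnp : ¬ (S i j ≠ 0 ∧ ∀ k < j, S i k = 0) := by
          rw [hpick]; intro h; apply hjv; rw [h]; exact (Nat.mod_eq_of_lt hlt).symm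
        rw [if_neg hnp, if_neg (fun h => hi (hieq.mp h))]; ring
  refine ⟨hPe, fun v i => ?_⟩
  simp only [Matrix.mulVec, dotProduct]
  rw [Finset.sum_eq_single (i + 1)]
  · rw [hPe]; simp
  · intro j _ hj; rw [hPe]; simp [hj]
  · simp
end

section
/- Let n ≥ 1. For a vector w : Fin n → ℤ, define pickFirst(w) : Fin n → ℤ by pickFirst(w) j = w j if w j ≠ 0 and w i = 0 for every i < j, and pickFirst(w) j = 0 otherwise. Define sequences v, V : ℕ → (Fin n → ℤ) by: V 0 = the all-ones vector, v 0 = pickFirst(V 0); and simultaneously v (k+1) = pickFirst(V k − v k), V (k+1) = V k − v k. Then for every k with 0 ≤ k < n, v k equals the canonical vector b_k, i.e. v k j = 1 if j = k and v k j = 0 otherwise. -/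
/-- `pickFirst w` keeps only the first (lowest index) nonzero entry of `w`,
setting all other entries to zero. -/
def pickFirst {n : ℕ} (w : Fin n → ℤ) : Fin n → ℤ :=
  fun j => if w j ≠ 0 ∧ ∀ i < j, w i = 0 then w j else 0

lemma pickFirst_step {n : ℕ} (k : ℕ) (hk : k < n)
    (W : Fin n → ℤ) (hW : ∀ j : Fin n, W j = if (j : ℕ) < k then 0 else 1) :
    ∀ j : Fin n, pickFirst W j = if (j : ℕ) = k then 1 else 0 := by
  intro j
  unfold pickFirst
  by_cases hjk : (j : ℕ) = k
  · simp only [hjk, if_pos rfl]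
    rw [if_pos]
    · rw [hW j, hjk]; simp
    constructor
    · rw [hW j, hjk]; simp
    · intro i hij
      rw [hW i]
      have : (i : ℕ) < k := by
        have := (Fin.lt_iff_val_lt_val.mp hij); omega
      exact if_pos this
  · simp only [hjk, if_false]
    rw [if_neg]
    rintro ⟨hne, hall⟩
    rcases Nat.lt_or_ge (j : ℕ) k with h | h
    · exact hne (by rw [hW j]; exact if_pos h)
    · have hklt : k < (j : ℕ) := lt_of_le_of_ne h (fun e => hjk e.symm)
      have := hall ⟨k, hk⟩ hklt
      rw [hW ⟨k, hk⟩] at this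
      simp at this

/-- The simultaneous recurrence simulating canonical vectors in dec-MATLANG:
`v k` is the canonical vector `b_k` for every `k < n`. -/
theorem pickFirst_canonical_vectors (n : ℕ) (hn : 1 ≤ n)
    (v V : ℕ → Fin n → ℤ)
    (hV0 : V 0 = fun _ => 1)
    (hv0 : v 0 = pickFirst (V 0))
    (hv : ∀ k, v (k + 1) = pickFirst (V k - v k))
    (hV : ∀ k, V (k + 1) = V k - v k) :
    ∀ (k : ℕ) (hk : k < n) (j : Fin n),
      v k j = if j = (⟨k, hk⟩ : Fin n) then 1 else 0 := by
  have hvk : ∀ k, v k = pickFirst (V k) := by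
    intro k
    cases k with
    | zero => exact hv0
    | succ m => rw [hv m, hV m]
  -- invariant on V
  have hVk : ∀ k, k ≤ n → ∀ j : Fin n, V k j = if (j : ℕ) < k then 0 else 1 := by
    intro k
    induction k with
    | zero => intro _ j; simp [hV0]
    | succ m ih =>
      intro hm j
      have hmn : m < n := hm
      have hVm := ih (le_of_lt hmn)
      have hvm : ∀ j : Fin n, v m j = if (j : ℕ) = m then 1 else 0 := by
        rw [hvk m]; exact pickFirst_step m hmn (V m) hVm
      rw [hV m]
      simp only [Pi.sub_apply, hVm j, hvm j]
      by_cases h1 : (j : ℕ) < m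
      · rw [if_pos h1, if_neg (by omega), if_pos (by omega)]; ring
      · by_cases h2 : (j : ℕ) = m
        · rw [if_neg h1, if_pos h2, if_pos (by omega)]; ring
        · rw [if_neg h1, if_neg h2, if_neg (by omega)]; ring
  intro k hk j
  rw [hvk k]
  have := pickFirst_step k hk (V k) (hVk k (le_of_lt hk))
  rw [this j]
  congr 1
  simp [Fin.ext_iff]
end

section
/- Let R be a type with a zero element and decidable equality, and let A be an m × n matrix over R. Let B be the m × n integer matrix with B i j = 1 if A i j ≠ 0 and B i j = 0 otherwise. Then for all i, j: (pickAny A) i j = A i j if (pickAny B) i j ≠ 0, and (pickAny A) i j = 0 otherwise. In other words, pickAny of A equals A masked by pickAny of the nonzero-indicator matrix of A. -/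
/-- `pickAny` of `A` equals `A` masked by `pickAny` of the 0/1 nonzero-indicator
matrix of `A`: the correctness of the `pickAny` rewrite rule in the simulation of
muse-MATLANG in dec-MATLANG. -/
theorem pickAny_eq_mask_by_indicator {m n : ℕ} {R : Type*} [Zero R] [DecidableEq R]
    (A : Matrix (Fin m) (Fin n) R)
    (B : Matrix (Fin m) (Fin n) ℤ) (hB : ∀ i j, B i j = if A i j ≠ 0 then 1 else 0) :
    ∀ i j, pickAny A i j = if pickAny B i j ≠ 0 then A i j else 0 := by
  intro i j
  have hBA : ∀ k, (B i k = 0 ↔ A i k = 0) := by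
    intro k
    rw [hB]
    by_cases h : A i k = 0 <;> simp [h]
  simp only [pickAny, Matrix.of_apply, hB]
  by_cases h1 : A i j = 0 <;> by_cases h2 : ∀ k < j, A i k = 0 <;>
    simp [h1, h2, hBA]
end

section
/- Let R be a semiring, T a type, and let f : R → T and g : T → R satisfy g ∘ f = id (so f is injective with retraction g). Define operations on T by x ⊞ y = f (g x + g y) and x ⊠ y = f (g x * g y). Then for every n : ℕ and all vectors a, b : Fin n → R, the right fold of ⊞ with initial value f 0 over the list [f (a 0) ⊠ f (b 0), …, f (a (n−1)) ⊠ f (b (n−1))] equals f (∑_{j : Fin n} a j * b j). That is, the dot product of a and b computed entirely through the encoded operations ⊞ and ⊠ on encoded values equals the encoding of the true dot product over R. -/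
/-- Correctness of the `cellmul` construction: the dot product of two vectors over a
semiring `R`, computed entirely through addition and multiplication encoded into a
type `T` via an injective encoding `f` with retraction `g`, equals the encoding of
the true dot product over `R`. -/
theorem encoded_dot_product_correct {R : Type*} [Semiring R] {T : Type*}
    (f : R → T) (g : T → R) (hgf : g ∘ f = id)
    (badd bmul : T → T → T)
    (hadd : ∀ x y, badd x y = f (g x + g y))
    (hmul : ∀ x y, bmul x y = f (g x * g y)) :
    ∀ (n : ℕ) (a b : Fin n → R),
      (List.ofFn (fun j : Fin n => bmul (f (a j)) (f (b j)))).foldr badd (f 0) =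
        f (∑ j : Fin n, a j * b j) := by
  have hg : ∀ x, g (f x) = x := fun x => congrFun hgf x
  intro n
  induction n with
  | zero => intro a b; simp
  | succ m ih =>
    intro a b
    simp only [List.ofFn_succ, List.foldr_cons, Fin.sum_univ_succ]
    rw [ih (fun j => a j.succ) (fun j => b j.succ), hadd, hmul, hg, hg, hg, hg]
end
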